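/- arXiv:2305.01259 — 8 statements merged into one kernel-verified Lean document; each statement's English description precedes it below -/
import Mathlib

section
/- Let R be a commutative ring and A a commutative R-algebra. Then A admits at most one separability idempotent over R: if e and e' are both separability idempotents for A over R, then e = e'. -/
open scoped TensorProduct

/-- `e : A ⊗[R] A` is a separability idempotent for the commutative `R`-algebra `A`:
the multiplication map `μ : A ⊗[R] A → A` sends `e` to `1`, and
`(a ⊗ 1) * e = (1 ⊗ a) * e` for all `a : A`. -/
def IsSeparabilityIdempotent (R A : Type*) [CommRing R] [CommRing A] [Algebra R A]
    (e : A ⊗[R] A) : Prop :=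
  Algebra.TensorProduct.lmul' (S := A) R e = 1 ∧
    ∀ a : A, (a ⊗ₜ[R] (1 : A)) * e = ((1 : A) ⊗ₜ[R] a) * e

/-- A commutative algebra admits at most one separability idempotent. -/
theorem separability_idempotent_unique {R A : Type*} [CommRing R] [CommRing A] [Algebra R A]
    (e e' : A ⊗[R] A)
    (he : IsSeparabilityIdempotent R A e) (he' : IsSeparabilityIdempotent R A e') :
    e = e' := by
  have key : ∀ (f : A ⊗[R] A), (∀ a : A, (a ⊗ₜ[R] (1 : A)) * f = ((1 : A) ⊗ₜ[R] a) * f) →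
      ∀ t : A ⊗[R] A, t * f = ((Algebra.TensorProduct.lmul' (S := A) R t) ⊗ₜ[R] (1 : A)) * f := by
    intro f hf t
    induction t using TensorProduct.induction_on with
    | zero => simp
    | tmul a b =>
        calc (a ⊗ₜ[R] b) * f = (a ⊗ₜ[R] (1 : A)) * (((1 : A) ⊗ₜ[R] b) * f) := by
              rw [← mul_assoc]; simp [Algebra.TensorProduct.tmul_mul_tmul]
          _ = (a ⊗ₜ[R] (1 : A)) * ((b ⊗ₜ[R] (1 : A)) * f) := by rw [hf b]
          _ = ((a * b) ⊗ₜ[R] (1 : A)) * f := by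
              rw [← mul_assoc]; simp [Algebra.TensorProduct.tmul_mul_tmul]
          _ = ((Algebra.TensorProduct.lmul' (S := A) R (a ⊗ₜ[R] b)) ⊗ₜ[R] (1 : A)) * f := by
              simp [Algebra.TensorProduct.lmul'_apply_tmul]
    | add x y hx hy =>
        rw [add_mul, hx, hy, map_add, TensorProduct.add_tmul, add_mul]
  have h1 : e * e' = e' := by
    rw [key e' he'.2 e, he.1, ← Algebra.TensorProduct.one_def, one_mul]
  have h2 : e' * e = e := by
    rw [key e he.2 e', he'.1, ← Algebra.TensorProduct.one_def, one_mul]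
  rw [← h1, mul_comm, h2]
end

section
/- Let R be a commutative ring, B a separable commutative R-algebra, A a commutative R-algebra, and let g : B → A and f : A → B be R-algebra homomorphisms with g ∘ f = id_A. Then there exists a unique idempotent element e ∈ B such that the kernel of g is the principal ideal (e) generated by e. Consequently g induces an R-algebra isomorphism B/(e) ≅ A, the algebra B decomposes as a product of R-algebras B ≅ (B/(e)) × (B/(1−e)) ≅ A × (B/(1−e)), and the complementary factor B/(1−e) is again a separable commutative R-algebra. -/
open scoped TensorProduct

/-- A surjective image of a separable algebra is separable. -/
lemma sep_of_surjective {R B C : Type*} [CommRing R] [CommRing B] [CommRing C]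
    [Algebra R B] [Algebra R C] {ε : B ⊗[R] B} (hε : IsSeparabilityIdempotent R B ε)
    (π : B →ₐ[R] C) (hπ : Function.Surjective π) :
    ∃ e' : C ⊗[R] C, IsSeparabilityIdempotent R C e' := by
  refine ⟨Algebra.TensorProduct.map π π ε, ?_, ?_⟩
  · have key : ∀ x : B ⊗[R] B,
        Algebra.TensorProduct.lmul' R (Algebra.TensorProduct.map π π x)
          = π (Algebra.TensorProduct.lmul' R x) := by
      intro x
      induction x using TensorProduct.induction_on with
      | zero => simp
      | tmul a b => simp [Algebra.TensorProduct.lmul'_apply_tmul]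
      | add x y hx hy => simp [map_add, hx, hy]
    rw [key, hε.1, map_one]
  · intro c
    obtain ⟨b, rfl⟩ := hπ c
    have h2 := congrArg (Algebra.TensorProduct.map π π) (hε.2 b)
    simpa [map_mul] using h2

/-- Idempotent generators of the same principal ideal coincide. -/
lemma idem_gen_unique {B : Type*} [CommRing B] {e₁ e₂ : B}
    (h1 : IsIdempotentElem e₁) (h2 : IsIdempotentElem e₂)
    (hspan : Ideal.span ({e₁} : Set B) = Ideal.span {e₂}) : e₁ = e₂ := by
  have mem1 : e₂ ∈ Ideal.span ({e₁} : Set B) := hspan ▸ Ideal.subset_span rfl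
  have mem2 : e₁ ∈ Ideal.span ({e₂} : Set B) := hspan ▸ Ideal.subset_span rfl
  obtain ⟨c, hc⟩ := Ideal.mem_span_singleton'.mp mem1
  obtain ⟨d, hd⟩ := Ideal.mem_span_singleton'.mp mem2
  have A1 : e₁ * e₂ = e₂ := by
    rw [← hc, ← mul_assoc, mul_comm e₁ c, mul_assoc, h1]
  have A2 : e₂ * e₁ = e₁ := by
    rw [← hd, ← mul_assoc, mul_comm e₂ d, mul_assoc, h2]
  rw [← A1, mul_comm, A2]

/-- If `B` is a separable commutative `R`-algebra and `g : B → A`, `f : A → B` are `R`-algebra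
maps with `g ∘ f = id`, then there is a unique idempotent `e ∈ B` with `ker g = (e)`;
moreover `g` induces an `R`-algebra isomorphism `B/(e) ≅ A`, `B` decomposes as
`B ≅ (B/(e)) × (B/(1-e)) ≅ A × (B/(1-e))`, and `B/(1-e)` is again separable over `R`. -/
theorem separable_retract_splits {R A B : Type*} [CommRing R] [CommRing A] [CommRing B]
    [Algebra R A] [Algebra R B]
    (hB : ∃ e : B ⊗[R] B, IsSeparabilityIdempotent R B e)
    (g : B →ₐ[R] A) (f : A →ₐ[R] B) (hgf : g.comp f = AlgHom.id R A) :
    (∃! e : B, IsIdempotentElem e ∧ RingHom.ker g = Ideal.span {e}) ∧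
      ∀ e : B, IsIdempotentElem e → RingHom.ker g = Ideal.span {e} →
        (∃ φ : (B ⧸ Ideal.span {e}) ≃ₐ[R] A,
            ∀ b : B, φ (Ideal.Quotient.mk (Ideal.span {e}) b) = g b) ∧
        Nonempty (B ≃ₐ[R] (B ⧸ Ideal.span {e}) × (B ⧸ Ideal.span {1 - e})) ∧
        Nonempty (B ≃ₐ[R] A × (B ⧸ Ideal.span {1 - e})) ∧
        ∃ e' : (B ⧸ Ideal.span {1 - e}) ⊗[R] (B ⧸ Ideal.span {1 - e}),
          IsSeparabilityIdempotent R (B ⧸ Ideal.span {1 - e}) e' := by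
  obtain ⟨ε, hε⟩ := hB
  have hgf' : ∀ a, g (f a) = a := fun a => AlgHom.congr_fun hgf a
  have hsurj : Function.Surjective g := fun a => ⟨f a, hgf' a⟩
  set h : B ⊗[R] B →ₐ[R] B :=
    (Algebra.TensorProduct.lmul' R).comp
      (Algebra.TensorProduct.map (AlgHom.id R B) (f.comp g)) with hh
  have hgh : ∀ x : B ⊗[R] B, g (h x) = g (Algebra.TensorProduct.lmul' R x) := by
    intro x
    induction x using TensorProduct.induction_on with
    | zero => simp
    | tmul a b => simp [hh, Algebra.TensorProduct.lmul'_apply_tmul, hgf']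
    | add x y hx hy => simp [map_add, hx, hy]
  have hker_mul : ∀ b : B, g b = 0 → b * h ε = 0 := by
    intro b hb
    have h1 : b * h ε = h ((b ⊗ₜ[R] 1) * ε) := by
      rw [map_mul]
      congr 1
      simp [hh]
    rw [h1, hε.2 b, map_mul]
    have h2 : h ((1 : B) ⊗ₜ[R] b) = f (g b) := by simp [hh]
    rw [h2, hb, map_zero, zero_mul]
  have hge : g (1 - h ε) = 0 := by
    rw [map_sub, map_one, hgh, hε.1, map_one, sub_self]
  set e₀ := 1 - h ε with he₀
  have hker : RingHom.ker g = Ideal.span {e₀} := by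
    ext b
    constructor
    · intro hb
      have hb0 : g b = 0 := hb
      have hbε : b * h ε = 0 := hker_mul b hb0
      have hbe : b = b * e₀ := by rw [he₀, mul_sub, mul_one, hbε, sub_zero]
      rw [hbe]
      exact Ideal.mul_mem_left _ _ (Ideal.subset_span rfl)
    · intro hb
      obtain ⟨c, rfl⟩ := Ideal.mem_span_singleton'.mp hb
      simp [RingHom.mem_ker, map_mul, hge]
  have hidem : IsIdempotentElem e₀ := by
    have h1 : e₀ * h ε = 0 := hker_mul e₀ hge
    show e₀ * e₀ = e₀
    calc e₀ * e₀ = e₀ * 1 - e₀ * h ε := by rw [he₀]; ring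
    _ = e₀ := by rw [h1, mul_one, sub_zero]
  constructor
  · exact ⟨e₀, ⟨hidem, hker⟩, fun y hy =>
      idem_gen_unique hy.1 hidem (hy.2.symm.trans hker)⟩
  · intro e he hke
    have h1e : IsIdempotentElem (1 - e) := he.one_sub
    -- the isomorphism B/(e) ≅ A
    let φ : (B ⧸ Ideal.span {e}) ≃ₐ[R] A :=
      (Ideal.quotientEquivAlgOfEq R hke.symm).trans
        (Ideal.quotientKerAlgEquivOfSurjective hsurj)
    have hφ : ∀ b : B, φ (Ideal.Quotient.mk (Ideal.span {e}) b) = g b := by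
      intro b
      simp only [φ, AlgEquiv.trans_apply, Ideal.quotientEquivAlgOfEq_mk]
      exact RingHom.kerLift_mk (g : B →+* A) b
    -- product decomposition
    let π₁ := Ideal.Quotient.mkₐ R (Ideal.span ({e} : Set B))
    let π₂ := Ideal.Quotient.mkₐ R (Ideal.span ({1 - e} : Set B))
    let ψ : B →ₐ[R] (B ⧸ Ideal.span {e}) × (B ⧸ Ideal.span {1 - e}) := π₁.prod π₂
    have hψbij : Function.Bijective ψ := by
      constructor
      · rw [injective_iff_map_eq_zero]
        intro b hb
        have hb1 : b ∈ Ideal.span ({e} : Set B) := by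
          have := congrArg Prod.fst hb
          simpa [ψ, π₁, Ideal.Quotient.eq_zero_iff_mem] using this
        have hb2 : b ∈ Ideal.span ({1 - e} : Set B) := by
          have := congrArg Prod.snd hb
          simpa [ψ, π₂, Ideal.Quotient.eq_zero_iff_mem] using this
        obtain ⟨c, hc⟩ := Ideal.mem_span_singleton'.mp hb1
        obtain ⟨d, hd⟩ := Ideal.mem_span_singleton'.mp hb2
        have hbe : b * e = 0 := by
          rw [← hd, mul_assoc, sub_mul, one_mul, he, sub_self, mul_zero]
        have hbe' : b * (1 - e) = 0 := by
          rw [← hc, mul_assoc, mul_sub, mul_one, he, sub_self, mul_zero]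
        have : b = b * e + b * (1 - e) := by ring
        rw [this, hbe, hbe', add_zero]
      · rintro ⟨x, y⟩
        obtain ⟨x', rfl⟩ := Ideal.Quotient.mk_surjective x
        obtain ⟨y', rfl⟩ := Ideal.Quotient.mk_surjective y
        refine ⟨x' * (1 - e) + y' * e, ?_⟩
        have he1 : (Ideal.Quotient.mk (Ideal.span ({e} : Set B))) e = 0 :=
          Ideal.Quotient.eq_zero_iff_mem.mpr (Ideal.subset_span rfl)
        have he2 : (Ideal.Quotient.mk (Ideal.span ({1 - e} : Set B))) (1 - e) = 0 :=
          Ideal.Quotient.eq_zero_iff_mem.mpr (Ideal.subset_span rfl)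
        have hc1 : (Ideal.Quotient.mk (Ideal.span ({e} : Set B))) (x' * (1 - e) + y' * e)
            = Ideal.Quotient.mk _ x' := by
          rw [map_add, map_mul, map_mul, he1, map_sub, map_one, he1, mul_zero, add_zero,
            sub_zero, mul_one]
        have hc2 : (Ideal.Quotient.mk (Ideal.span ({1 - e} : Set B))) (x' * (1 - e) + y' * e)
            = Ideal.Quotient.mk _ y' := by
          have : (Ideal.Quotient.mk (Ideal.span ({1 - e} : Set B))) e = 1 := by
            have := he2
            rw [map_sub, map_one, sub_eq_zero] at this
            exact this.symm
          rw [map_add, map_mul, map_mul, he2, mul_zero, zero_add, this, mul_one]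
        exact Prod.ext (by simpa [ψ, π₁] using hc1) (by simpa [ψ, π₂] using hc2)
    let Ψ := AlgEquiv.ofBijective ψ hψbij
    -- map the first factor through φ
    let χ : (B ⧸ Ideal.span ({e} : Set B)) × (B ⧸ Ideal.span ({1 - e} : Set B)) →ₐ[R]
        A × (B ⧸ Ideal.span ({1 - e} : Set B)) :=
      (φ.toAlgHom.comp (AlgHom.fst R _ _)).prod (AlgHom.snd R _ _)
    have hχbij : Function.Bijective χ := by
      have : (χ : _ → _) = Prod.map φ id := rfl
      rw [this]
      exact Function.Bijective.prodMap φ.bijective Function.bijective_id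
    refine ⟨⟨φ, hφ⟩, ⟨Ψ⟩, ⟨Ψ.trans (AlgEquiv.ofBijective χ hχbij)⟩, ?_⟩
    exact sep_of_surjective hε π₂ (Ideal.Quotient.mkₐ_surjective R _)
end

section
/- Let R be a commutative ring and A a separable commutative R-algebra with separability idempotent e ∈ A ⊗[R] A. Then the kernel of the multiplication map μ : A ⊗[R] A → A is the principal ideal generated by 1 ⊗ 1 − e, so μ induces an isomorphism of R-algebras (A ⊗[R] A)/(1 ⊗ 1 − e) ≅ A, and A ⊗[R] A decomposes as a product of rings A ⊗[R] A ≅ A × A', where A' := (A ⊗[R] A)/(e) is a separable commutative A-algebra for the A-algebra structure through the left tensor factor, and the first projection of this decomposition corresponds to μ. -/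
open scoped TensorProduct

/-!
The identity `x * e = (μ x ⊗ 1) * e` shows that `e` is idempotent and that `ker μ` is the
annihilator of `e`, that is, the ideal generated by the complementary idempotent `1 - e`.
The splitting of `A ⊗[R] A` is the decomposition along the idempotents `1 - e` and `e`.
The image of `e` in `A' ⊗[A] A'` is a separability idempotent for `A'` over `A`, because the
elements `b` with `(b ⊗ 1) * e = (1 ⊗ b) * e` form an `A`-subalgebra, and it contains the
image of the right tensor factor, which generates `A'` over `A`.
-/

open Algebra.TensorProduct

theorem Algebra.TensorProduct.lmul'_surjective {R A : Type*} [CommSemiring R] [CommSemiring A]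
    [Algebra R A] : Function.Surjective (lmul' R : A ⊗[R] A →ₐ[R] A) :=
  fun a => ⟨a ⊗ₜ 1, by rw [lmul'_apply_tmul, mul_one]⟩

theorem Algebra.TensorProduct.adjoin_range_mkₐ_comp_includeRight {R A B : Type*} [CommRing R]
    [CommRing A] [CommRing B] [Algebra R A] [Algebra R B] (I : Ideal (A ⊗[R] B)) :
    Algebra.adjoin A (Set.range ((Ideal.Quotient.mkₐ R I).comp includeRight)) = ⊤ := by
  have h := adjoin_one_tmul_image_eq_top (A := A) (Set.univ : Set B) (Algebra.adjoin_univ R B)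
  rw [← (AlgHom.range_eq_top _).mpr (Ideal.Quotient.mkₐ_surjective A I), ← Algebra.map_top, ← h,
    AlgHom.map_adjoin, Set.image_image, Set.image_univ]
  rfl

namespace IsSeparabilityIdempotent

variable {R A : Type*} [CommRing R] [CommRing A] [Algebra R A] {e : A ⊗[R] A}

theorem mul_eq_lmul'_tmul_one_mul (he : IsSeparabilityIdempotent R A e) (x : A ⊗[R] A) :
    x * e = (lmul' R x ⊗ₜ[R] 1) * e := by
  induction x using TensorProduct.induction_on with
  | zero => simp
  | tmul a b =>
    calc a ⊗ₜ[R] b * e = a ⊗ₜ[R] 1 * (1 ⊗ₜ[R] b * e) := by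
          rw [← mul_assoc, tmul_mul_tmul, mul_one, one_mul]
      _ = (a * b) ⊗ₜ[R] 1 * e := by rw [← he.2, ← mul_assoc, tmul_mul_tmul, mul_one]
      _ = _ := by rw [lmul'_apply_tmul]
  | add x y hx hy => rw [add_mul, hx, hy, map_add, TensorProduct.add_tmul, add_mul]

theorem mul_eq_zero_iff_lmul'_eq_zero (he : IsSeparabilityIdempotent R A e) {x : A ⊗[R] A} :
    x * e = 0 ↔ lmul' R x = 0 := by
  refine ⟨fun h => ?_, fun h => ?_⟩
  · simpa [he.1] using congr_arg (lmul' R) h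
  · rw [he.mul_eq_lmul'_tmul_one_mul, h, TensorProduct.zero_tmul, zero_mul]

theorem isIdempotentElem (he : IsSeparabilityIdempotent R A e) : IsIdempotentElem e := by
  show e * e = e
  simpa [he.1, ← Algebra.TensorProduct.one_def] using he.mul_eq_lmul'_tmul_one_mul e

theorem ker_lmul' (he : IsSeparabilityIdempotent R A e) :
    RingHom.ker (lmul' R : A ⊗[R] A →ₐ[R] A) = Ideal.span {1 - e} := by
  ext x
  rw [RingHom.mem_ker, ← he.mul_eq_zero_iff_lmul'_eq_zero,
    ← he.isIdempotentElem.ker_toSpanSingleton_eq_span]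
  rfl

noncomputable def quotientAlgEquiv (he : IsSeparabilityIdempotent R A e) :
    (A ⊗[R] A ⧸ Ideal.span {1 - e}) ≃ₐ[R] A :=
  (Ideal.quotientEquivAlgOfEq R he.ker_lmul'.symm).trans
    (Ideal.quotientKerAlgEquivOfSurjective lmul'_surjective)

@[simp]
theorem quotientAlgEquiv_mk (he : IsSeparabilityIdempotent R A e) (x : A ⊗[R] A) :
    he.quotientAlgEquiv (Ideal.Quotient.mk _ x) = lmul' R x := by
  simp [quotientAlgEquiv]

noncomputable def prodQuotientAlgEquiv (he : IsSeparabilityIdempotent R A e) :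
    A ⊗[R] A ≃ₐ[R] A × (A ⊗[R] A ⧸ Ideal.span {e}) :=
  (AlgEquiv.prodQuotientOfIsIdempotentElem R he.isIdempotentElem.one_sub he.isIdempotentElem
    (sub_add_cancel 1 e) (by rw [sub_mul, one_mul, he.isIdempotentElem, sub_self])).trans
    (AlgEquiv.prodCongr he.quotientAlgEquiv AlgEquiv.refl)

@[simp]
theorem prodQuotientAlgEquiv_apply_fst (he : IsSeparabilityIdempotent R A e) (x : A ⊗[R] A) :
    (he.prodQuotientAlgEquiv x).1 = lmul' R x := by
  simp [prodQuotientAlgEquiv]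

theorem map_of_adjoin_range_eq_top {S B : Type*} [CommRing S] [Algebra R S] [CommRing B]
    [Algebra S B] [Algebra R B] [IsScalarTower R S B] (he : IsSeparabilityIdempotent R A e)
    (f : A →ₐ[R] B) (hf : Algebra.adjoin S (Set.range f) = ⊤) :
    IsSeparabilityIdempotent S B (productMap ((includeLeft (S := R)).comp f)
      (((includeRight (R := S) (A := B)).restrictScalars R).comp f) e) := by
  set θ := productMap ((includeLeft (S := R)).comp f)
    (((includeRight (R := S) (A := B)).restrictScalars R).comp f)
  have hθ (a b : A) : θ (a ⊗ₜ b) = f a ⊗ₜ f b := by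
    simp [θ, productMap_apply_tmul, tmul_mul_tmul]
  have hμθ : ((lmul' S).restrictScalars R).comp θ = f.comp (lmul' R) := by
    ext a <;> simp [θ]
  refine ⟨by simpa [he.1] using AlgHom.congr_fun hμθ e, fun b => ?_⟩
  have hb : b ∈ Algebra.adjoin S (Set.range f) := hf ▸ Algebra.mem_top
  induction hb using Algebra.adjoin_induction with
  | mem x hx =>
    obtain ⟨a, rfl⟩ := hx
    simpa [hθ] using congr_arg θ (he.2 a)
  | algebraMap s => rw [tmul_one_eq_one_tmul]
  | add x y _ _ hx hy =>
    rw [TensorProduct.add_tmul, TensorProduct.tmul_add, add_mul, add_mul, hx, hy]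
  | mul x y _ _ hx hy =>
    calc (x * y) ⊗ₜ[S] 1 * θ e = x ⊗ₜ 1 * (y ⊗ₜ 1 * θ e) := by
          rw [← mul_assoc, tmul_mul_tmul, mul_one]
      _ = 1 ⊗ₜ y * (x ⊗ₜ 1 * θ e) := by rw [hy, mul_left_comm]
      _ = _ := by rw [hx, ← mul_assoc, tmul_mul_tmul, one_mul, mul_comm y x]

end IsSeparabilityIdempotent

/-- For a separable commutative `R`-algebra `A` with separability idempotent `e`, the kernel
of the multiplication map `μ : A ⊗[R] A → A` is the principal ideal `(1 ⊗ 1 - e)`, so `μ`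
induces an `R`-algebra isomorphism `(A ⊗[R] A)/(1 ⊗ 1 - e) ≅ A`, and `A ⊗[R] A` splits as a
product of rings `A × A'` with first projection `μ`, where `A' := (A ⊗[R] A)/(e)` is a
separable commutative `A`-algebra (via the left tensor factor). -/
theorem separable_mul_splits {R A : Type*} [CommRing R] [CommRing A] [Algebra R A]
    (e : A ⊗[R] A) (he : IsSeparabilityIdempotent R A e) :
    RingHom.ker (Algebra.TensorProduct.lmul' (S := A) R) =
        Ideal.span {(1 : A) ⊗ₜ[R] (1 : A) - e} ∧
    (∃ φ : ((A ⊗[R] A) ⧸ Ideal.span {(1 : A) ⊗ₜ[R] (1 : A) - e}) ≃ₐ[R] A,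
        ∀ x : A ⊗[R] A,
          φ (Ideal.Quotient.mk (Ideal.span {(1 : A) ⊗ₜ[R] (1 : A) - e}) x) =
            Algebra.TensorProduct.lmul' (S := A) R x) ∧
    (∃ ψ : (A ⊗[R] A) ≃+* A × ((A ⊗[R] A) ⧸ Ideal.span {e}),
        ∀ x : A ⊗[R] A, (ψ x).1 = Algebra.TensorProduct.lmul' (S := A) R x) ∧
    ∃ e' : ((A ⊗[R] A) ⧸ Ideal.span {e}) ⊗[A] ((A ⊗[R] A) ⧸ Ideal.span {e}),
      IsSeparabilityIdempotent A ((A ⊗[R] A) ⧸ Ideal.span {e}) e' :=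
  ⟨he.ker_lmul', ⟨he.quotientAlgEquiv, he.quotientAlgEquiv_mk⟩,
    ⟨he.prodQuotientAlgEquiv, he.prodQuotientAlgEquiv_apply_fst⟩,
    ⟨_, he.map_of_adjoin_range_eq_top _ (adjoin_range_mkₐ_comp_includeRight _)⟩⟩
end

section
/- Let R be a commutative ring, S a commutative R-algebra, and G a finite group acting on S by R-algebra automorphisms. Suppose that the R-algebra homomorphism h : S ⊗[R] S → (G → S) determined by h(a ⊗ b)(σ) = a · σ(b) (with pointwise ring structure on G → S) is bijective. Then S is separable over R; explicitly, e := h⁻¹(δ₁) is a separability idempotent for S over R, where δ₁ : G → S is the function with value 1 at the identity element of G and value 0 elsewhere. -/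
open scoped TensorProduct

/-- If a finite group `G` acts on the commutative `R`-algebra `S` by `R`-algebra
automorphisms and the Galois map `h : S ⊗[R] S → (G → S)`, `h(a ⊗ b)(σ) = a · σ(b)`, is
bijective, then `S` is separable over `R`, with separability idempotent `h⁻¹(δ₁)` where
`δ₁` is the indicator function of the identity of `G`. -/
theorem galois_extension_separable {R S G : Type*} [CommRing R] [CommRing S] [Algebra R S]
    [Group G] [Finite G] [DecidableEq G] (ρ : G →* (S ≃ₐ[R] S))
    (h : S ⊗[R] S →ₐ[R] (G → S))
    (hh : ∀ (a b : S) (σ : G), h (a ⊗ₜ[R] b) σ = a * ρ σ b)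
    (hbij : Function.Bijective h) :
    IsSeparabilityIdempotent R S
      ((Equiv.ofBijective (⇑h) hbij).symm
        (fun σ : G => if σ = 1 then (1 : S) else 0)) := by
  set e := (Equiv.ofBijective (⇑h) hbij).symm
      (fun σ : G => if σ = 1 then (1 : S) else 0) with he_def
  have he : h e = fun σ : G => if σ = 1 then (1 : S) else 0 := by
    exact (Equiv.ofBijective (⇑h) hbij).apply_symm_apply
      (fun σ : G => if σ = 1 then (1 : S) else 0)
  have key : ∀ x : S ⊗[R] S, Algebra.TensorProduct.lmul' (S := S) R x = h x 1 := by
    intro x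
    induction x using TensorProduct.induction_on with
    | zero => simp
    | tmul a b => simp [hh]
    | add x y hx hy =>
      simp only [map_add, Pi.add_apply, hx, hy]
  constructor
  · rw [key e, he]; simp
  · intro a
    apply hbij.injective
    funext σ
    simp only [map_mul, Pi.mul_apply, he, hh]
    by_cases hσ : σ = 1 <;> simp [hσ]
end

section
/- Let S be a commutative ring, G a finite group acting on S by ring automorphisms, and let R := S^G be the fixed subring. Suppose that the map h : S ⊗[R] S → (G → S) determined by h(a ⊗ b)(σ) = a · σ(b) is bijective. Then for every subgroup K ≤ G, the fixed subring S^K is a separable R-algebra, i.e. S^K admits a separability idempotent over R. -/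
open scoped TensorProduct

variable (G S : Type*) [Group G] [CommRing S] [MulSemiringAction G S]

/-- The subring `S^K` of elements fixed by all elements of the subgroup `K ≤ G`. -/
def fixedSubring (K : Subgroup G) : Subring S where
  carrier := {x | ∀ g ∈ K, g • x = x}
  zero_mem' := fun g _ => smul_zero g
  one_mem' := fun g _ => smul_one g
  add_mem' := fun {a b} ha hb g hg => by rw [smul_add, ha g hg, hb g hg]
  mul_mem' := fun {a b} ha hb g hg => by rw [smul_mul', ha g hg, hb g hg]
  neg_mem' := fun {a} ha g hg => by rw [smul_neg, ha g hg]

theorem fixedSubring_top_le (K : Subgroup G) :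
    fixedSubring G S ⊤ ≤ fixedSubring G S K :=
  fun _ hx g _ => hx g trivial

/-- `S^K` is an algebra over `R = S^G` via the inclusion of subrings. -/
noncomputable instance (K : Subgroup G) :
    Algebra (fixedSubring G S ⊤) (fixedSubring G S K) :=
  (Subring.inclusion (fixedSubring_top_le G S K)).toAlgebra

section Aux

variable (K : Subgroup G) [Fintype K]

/-- The twisted trace `s ↦ ∑_{k ∈ K} k • (c * s)`, landing in the fixed subring `S^K`,
as an `S^G`-linear map. -/
noncomputable def trL (c : S) :
    S →ₗ[fixedSubring G S ⊤] fixedSubring G S K where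
  toFun s := ⟨∑ k : K, (k : G) • (c * s), by
    intro g hg
    rw [Finset.smul_sum]
    exact Fintype.sum_equiv (Equiv.mulLeft (⟨g, hg⟩ : K)) _ _ fun k => by
      rw [← mul_smul]; rfl⟩
  map_add' x y := by
    apply Subtype.ext
    show ∑ k : K, (k : G) • (c * (x + y))
      = (∑ k : K, (k : G) • (c * x)) + ∑ k : K, (k : G) • (c * y)
    simp [mul_add, smul_add, Finset.sum_add_distrib]
  map_smul' r s := by
    apply Subtype.ext
    show ∑ k : K, (k : G) • (c * ((r : S) * s)) = (r : S) * ∑ k : K, (k : G) • (c * s)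
    rw [Finset.mul_sum]
    refine Finset.sum_congr rfl fun k _ => ?_
    rw [show c * ((r : S) * s) = (r : S) * (c * s) by ring,
      smul_mul', r.2 (k : G) trivial]

@[simp] lemma trL_coe (c s : S) :
    ((trL G S K c s : fixedSubring G S K) : S) = ∑ k : K, (k : G) • (c * s) := rfl

/-- The inclusion `S^K → S` as an `S^G`-algebra homomorphism. -/
noncomputable def ιA : fixedSubring G S K →ₐ[fixedSubring G S ⊤] S where
  toFun := Subtype.val
  map_one' := rfl
  map_mul' _ _ := rfl
  map_zero' := rfl
  map_add' _ _ := rfl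
  commutes' _ := rfl

omit [Fintype K] in
@[simp] lemma ιA_apply (t : fixedSubring G S K) : ιA G S K t = (t : S) := rfl

end Aux

set_option maxHeartbeats 1000000 in
set_option synthInstance.maxHeartbeats 400000 in
/-- If `G` is a finite group acting on a commutative ring `S` by ring automorphisms,
`R := S^G` is the fixed subring, and the Galois map `h : S ⊗[R] S → (G → S)`,
`h(a ⊗ b)(σ) = a · σ(b)`, is bijective, then for every subgroup `K ≤ G` the fixed subring
`S^K` admits a separability idempotent over `R`. -/
theorem fixedPoints_subgroup_separable [Finite G]
    (h : S ⊗[fixedSubring G S ⊤] S →ₐ[fixedSubring G S ⊤] (G → S))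
    (hh : ∀ (a b : S) (σ : G), h (a ⊗ₜ[fixedSubring G S ⊤] b) σ = a * σ • b)
    (hbij : Function.Bijective h) (K : Subgroup G) :
    ∃ e : (fixedSubring G S K) ⊗[fixedSubring G S ⊤] (fixedSubring G S K),
      IsSeparabilityIdempotent (fixedSubring G S ⊤) (fixedSubring G S K) e := by
  classical
  letI : Fintype K := Fintype.ofFinite K
  obtain ⟨e₀, he₀⟩ := hbij.2 (fun g => if g = 1 then (1 : S) else 0)
  obtain ⟨F, hF⟩ := TensorProduct.exists_finset e₀
  -- key dual-basis identity: `∑_p tr_K(p.2 * s) * p.1 = s`.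
  have key : ∀ s : S, ∑ p ∈ F, ((trL G S K 1 (p.2 * s) : S)) * p.1 = s := by
    intro s
    calc ∑ p ∈ F, ((trL G S K 1 (p.2 * s) : S)) * p.1
        = ∑ p ∈ F, ∑ k : K, (p.1 * (k : G) • p.2) * ((k : G) • s) := by
          refine Finset.sum_congr rfl fun p _ => ?_
          rw [trL_coe, Finset.sum_mul]
          refine Finset.sum_congr rfl fun k _ => ?_
          rw [one_mul, smul_mul']
          ring
      _ = ∑ k : K, ∑ p ∈ F, (p.1 * (k : G) • p.2) * ((k : G) • s) := Finset.sum_comm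
      _ = ∑ k : K, (h e₀ (k : G)) * ((k : G) • s) := by
          refine Finset.sum_congr rfl fun k _ => ?_
          rw [hF, map_sum, Finset.sum_apply, Finset.sum_mul]
          exact Finset.sum_congr rfl fun p _ => by rw [hh]
      _ = ∑ k : K, (if k = (1 : K) then s else 0) := by
          refine Finset.sum_congr rfl fun k _ => ?_
          simp only [he₀]
          by_cases hk : k = (1 : K)
          · subst hk; simp
          · rw [if_neg (fun hk1 => hk (OneMemClass.coe_eq_one.mp hk1)), if_neg hk, zero_mul]
      _ = s := by rw [Finset.sum_ite_eq' Finset.univ (1 : K) fun _ => s]; simp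
  -- the image of the trace is an ideal of `S^K`
  let I : Ideal (fixedSubring G S K) :=
    { carrier := Set.range (trL G S K 1)
      add_mem' := by rintro _ _ ⟨a, rfl⟩ ⟨b, rfl⟩; exact ⟨a + b, map_add _ _ _⟩
      zero_mem' := ⟨0, map_zero _⟩
      smul_mem' := by
        rintro t _ ⟨a, rfl⟩
        refine ⟨(t : S) * a, ?_⟩
        apply Subtype.ext
        show ∑ k : K, (k : G) • (1 * ((t : S) * a))
          = (t : S) * ∑ k : K, (k : G) • (1 * a)
        rw [Finset.mul_sum]
        refine Finset.sum_congr rfl fun k _ => ?_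
        rw [one_mul, one_mul, smul_mul', t.2 (k : G) k.2] }
  have hmemI : ∀ s : S, trL G S K 1 s ∈ I := fun s => ⟨s, rfl⟩
  -- Nakayama: the trace hits 1
  have hfg : (⊤ : Submodule (fixedSubring G S K) S).FG := by
    refine ⟨F.image Prod.fst, eq_top_iff.mpr fun s _ => ?_⟩
    rw [← key s]
    refine Submodule.sum_mem _ fun p hp => ?_
    exact Submodule.smul_mem _ (trL G S K 1 (p.2 * s)) (Submodule.subset_span
      (Finset.mem_coe.mpr (Finset.mem_image_of_mem Prod.fst hp)))
  have hle : (⊤ : Submodule (fixedSubring G S K) S) ≤ I • ⊤ := by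
    intro s _
    rw [← key s]
    refine Submodule.sum_mem _ fun p _ => ?_
    exact Submodule.smul_mem_smul (hmemI _) Submodule.mem_top
  obtain ⟨r, hr1, hr0⟩ :=
    Submodule.exists_sub_one_mem_and_smul_eq_zero_of_fg_of_le_smul I ⊤ hfg hle
  have hrz : r = 0 := by
    have h10 : (r : S) * 1 = 0 := hr0 1 Submodule.mem_top
    rw [mul_one] at h10
    exact Subtype.ext h10
  have h1I : (1 : fixedSubring G S K) ∈ I := by
    rw [hrz, zero_sub] at hr1
    simpa using I.neg_mem hr1
  obtain ⟨c, hcT⟩ := h1I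
  have hc : ∑ k : K, (k : G) • c = 1 := by
    have := congrArg Subtype.val hcT
    simpa [one_mul] using this
  -- retraction of the inclusion
  have hEι : ∀ t : fixedSubring G S K, trL G S K c (t : S) = t := by
    intro t
    apply Subtype.ext
    rw [trL_coe]
    calc ∑ k : K, (k : G) • (c * (t : S))
        = ∑ k : K, ((k : G) • c) * (t : S) := by
          refine Finset.sum_congr rfl fun k _ => ?_
          rw [smul_mul', t.2 (k : G) k.2]
      _ = (∑ k : K, (k : G) • c) * (t : S) := by rw [Finset.sum_mul]
      _ = (t : S) := by rw [hc, one_mul]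
  -- the comparison map `Φ : S^K ⊗ S^K → (G → S)` and its injectivity
  set Φ : (fixedSubring G S K) ⊗[fixedSubring G S ⊤] (fixedSubring G S K)
      →ₐ[fixedSubring G S ⊤] (G → S) :=
    h.comp (Algebra.TensorProduct.map (ιA G S K) (ιA G S K)) with hΦdef
  have hΦt : ∀ (t t' : fixedSubring G S K) (σ : G),
      Φ (t ⊗ₜ t') σ = (t : S) * σ • (t' : S) := by
    intro t t' σ
    rw [hΦdef, AlgHom.comp_apply, Algebra.TensorProduct.map_tmul, ιA_apply, ιA_apply, hh]
  have hsec : ∀ z : (fixedSubring G S K) ⊗[fixedSubring G S ⊤] (fixedSubring G S K),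
      TensorProduct.map (trL G S K c) (trL G S K c)
        ((Algebra.TensorProduct.map (ιA G S K) (ιA G S K)) z) = z := by
    intro z
    induction z using TensorProduct.induction_on with
    | zero => simp
    | tmul t t' => rw [Algebra.TensorProduct.map_tmul, TensorProduct.map_tmul,
        ιA_apply, ιA_apply, hEι, hEι]
    | add x y hx hy => rw [map_add, map_add, hx, hy]
  have hΦinj : Function.Injective Φ := by
    rw [hΦdef, AlgHom.coe_comp]
    exact hbij.1.comp (Function.LeftInverse.injective hsec)
  -- the main computation
  have hcomp : ∀ z : S ⊗[fixedSubring G S ⊤] S, ∀ σ : G,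
      Φ (TensorProduct.map (trL G S K c) (trL G S K 1) z) σ
        = ∑ k : K, ∑ k' : K,
            ((k : G) • c) * ((k : G) • (h z ((k : G)⁻¹ * σ * (k' : G)))) := by
    intro z
    induction z using TensorProduct.induction_on with
    | zero => intro σ; simp
    | tmul a b =>
        intro σ
        rw [TensorProduct.map_tmul, hΦt, trL_coe, trL_coe, Finset.smul_sum,
          Finset.sum_mul_sum]
        refine Finset.sum_congr rfl fun k _ => Finset.sum_congr rfl fun k' _ => ?_
        rw [hh, one_mul, smul_mul' (k : G) c a, smul_mul' (k : G) a, ← mul_smul,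
          ← mul_smul, show (k : G) * ((k : G)⁻¹ * σ * (k' : G)) = σ * (k' : G) by group]
        ring
    | add x y hx hy =>
        intro σ
        rw [map_add, map_add]
        simp [Pi.add_apply, hx σ, hy σ, mul_add, smul_add, Finset.sum_add_distrib]
  have hΦe : ∀ σ : G,
      Φ (TensorProduct.map (trL G S K c) (trL G S K 1) e₀) σ
        = if σ ∈ K then 1 else 0 := by
    intro σ
    have hstep : Φ (TensorProduct.map (trL G S K c) (trL G S K 1) e₀) σ
        = ∑ k : K, ∑ k' : K,
            (if (k : G) = σ * (k' : G) then (k : G) • c else 0) := by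
      rw [hcomp e₀ σ]
      refine Finset.sum_congr rfl fun k _ => Finset.sum_congr rfl fun k' _ => ?_
      simp only [he₀]
      split_ifs with h1 h2 h2
      · rw [smul_one, mul_one]
      · exact absurd (by rw [← inv_mul_eq_one (a := (k : G)), ← mul_assoc]; exact h1) h2
      · exact absurd (by rw [mul_assoc, inv_mul_eq_one]; exact h2) h1
      · rw [smul_zero, mul_zero]
    rw [hstep]
    by_cases hσ : σ ∈ K
    · rw [if_pos hσ, Finset.sum_comm]
      have hcollapse : ∀ k' : K,
          (∑ k : K, if (k : G) = σ * (k' : G) then (k : G) • c else 0)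
            = (σ * (k' : G)) • c := by
        intro k'
        have hcond : ∀ k : K, (if (k : G) = σ * (k' : G) then (k : G) • c else 0)
            = (if k = (⟨σ, hσ⟩ * k' : K) then (k : G) • c else 0) := by
          intro k
          refine if_congr ?_ rfl rfl
          constructor
          · intro hk; exact Subtype.ext hk
          · intro hk; rw [hk]; rfl
        rw [Finset.sum_congr rfl fun k _ => hcond k,
          Finset.sum_ite_eq' Finset.univ (⟨σ, hσ⟩ * k' : K) (fun k : K => (k : G) • c),
          if_pos (Finset.mem_univ _)]
        rfl
      rw [Finset.sum_congr rfl fun k' _ => hcollapse k',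
        show (∑ k' : K, ((σ * (k' : G)) • c)) = ∑ k : K, ((k : G) • c) from
          Fintype.sum_equiv (Equiv.mulLeft (⟨σ, hσ⟩ : K)) _ _ fun k' => rfl, hc]
    · rw [if_neg hσ]
      refine Finset.sum_eq_zero fun k _ => Finset.sum_eq_zero fun k' _ => ?_
      rw [if_neg]
      intro hk
      refine hσ ?_
      have : σ = ((k * k'⁻¹ : K) : G) := by
        push_cast
        rw [hk]
        group
      rw [this]
      exact SetLike.coe_mem (k * k'⁻¹)
  refine ⟨TensorProduct.map (trL G S K c) (trL G S K 1) e₀, ?_, ?_⟩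
  · -- multiplication sends e to 1
    have hμ : ∀ z : (fixedSubring G S K) ⊗[fixedSubring G S ⊤] (fixedSubring G S K),
        ((Algebra.TensorProduct.lmul' (S := fixedSubring G S K)
          (fixedSubring G S ⊤) z : S)) = Φ z 1 := by
      intro z
      induction z using TensorProduct.induction_on with
      | zero => simp
      | tmul t t' => rw [Algebra.TensorProduct.lmul'_apply_tmul, hΦt, one_smul]; rfl
      | add x y hx hy => rw [map_add, map_add, Pi.add_apply, ← hx, ← hy]; rfl
    have h1 := hμ (TensorProduct.map (trL G S K c) (trL G S K 1) e₀)
    rw [hΦe 1, if_pos K.one_mem] at h1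
    exact Subtype.ext h1
  · -- the Casimir condition
    intro t
    apply hΦinj
    rw [map_mul, map_mul]
    funext σ
    rw [Pi.mul_apply, Pi.mul_apply, hΦt, hΦt, hΦe σ]
    by_cases hσ : σ ∈ K
    · rw [t.2 σ hσ, OneMemClass.coe_one, smul_one, mul_one, one_mul]
    · rw [if_neg hσ, mul_zero, mul_zero]
end

section
/- Let R be a commutative ring, A a commutative R-algebra which is faithfully flat as an R-module, and M an R-module. If the base change A ⊗[R] M is a finitely generated projective A-module, then M is a finitely generated projective R-module. -/
/-!
Finite generation and flatness descend along faithfully flat base change, and so does finite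
presentation. Over any commutative ring a finitely presented flat module is projective, while a
finitely generated projective module is finitely presented.
-/

open TensorProduct

/-- Since `A` is flat, the kernel of a presentation `R^n ↠ M` base changes to the kernel of
`A^n ↠ A ⊗[R] M`, which is finitely generated; finite generation then descends to the kernel. -/
lemma Module.FinitePresentation.of_finitePresentation_tensorProduct_of_faithfullyFlat
    {R : Type*} (A : Type*) {M : Type*} [CommRing R] [CommRing A] [Algebra R A]
    [Module.FaithfullyFlat R A] [AddCommGroup M] [Module R M]
    [Module.FinitePresentation A (A ⊗[R] M)] : Module.FinitePresentation R M := by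
  have : Module.Finite R M := .of_finite_tensorProduct_of_faithfullyFlat A
  obtain ⟨n, g, hg⟩ := Module.Finite.exists_fin' R M
  have hgA : Function.Surjective (AlgebraTensorModule.lTensor A A g) :=
    LinearMap.lTensor_surjective A hg
  have : Module.Finite A (LinearMap.ker (AlgebraTensorModule.lTensor A A g)) :=
    Module.Finite.iff_fg.mpr (Module.FinitePresentation.fg_ker _ hgA)
  have : Module.Finite A (A ⊗[R] LinearMap.ker g) :=
    .equiv (LinearMap.tensorKerEquiv A A g).symm
  have : Module.Finite R (LinearMap.ker g) := .of_finite_tensorProduct_of_faithfullyFlat A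
  exact Module.finitePresentation_of_free_of_surjective g hg (Module.Finite.iff_fg.mp this)

/-- Finitely generated projective modules descend along faithfully flat base change:
if `A` is a faithfully flat commutative `R`-algebra and `A ⊗[R] M` is a finitely generated
projective `A`-module, then `M` is a finitely generated projective `R`-module. -/
theorem finite_projective_descends_faithfully_flat
    (R A M : Type*) [CommRing R] [CommRing A] [Algebra R A] [Module.FaithfullyFlat R A]
    [AddCommGroup M] [Module R M]
    (hfin : Module.Finite A (A ⊗[R] M)) (hproj : Module.Projective A (A ⊗[R] M)) :
    Module.Finite R M ∧ Module.Projective R M := by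
  have : Module.FinitePresentation A (A ⊗[R] M) := Module.finitePresentation_of_projective _ _
  have : Module.Flat R M := .of_flat_tensorProduct R M A
  have : Module.FinitePresentation R M :=
    .of_finitePresentation_tensorProduct_of_faithfullyFlat A
  exact ⟨inferInstance, Module.Flat.projective_of_finitePresentation⟩
end

section
/- Let p be a prime number and let G be a finite group of p-rank one, meaning that every commutative subgroup H of G in which every element x satisfies x^p = 1 has order at most p. Then any two subgroups of G of order p are conjugate in G. -/
private lemma aux_eq_zpowers {G : Type*} [Group G] [Finite G]
    {p : ℕ} (hp : p.Prime)
    (hrank : ∀ H : Subgroup G, (∀ x ∈ H, ∀ y ∈ H, x * y = y * x) →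
      (∀ x ∈ H, x ^ p = 1) → Nat.card H ≤ p)
    (P : Subgroup G) (hP : Nat.card P = p)
    (z : G) (hz : orderOf z = p) (hcomm : ∀ x ∈ P, Commute z x) :
    P = Subgroup.zpowers z := by
  have hPc : ∀ a b : P, Commute (a : G) (b : G) := by
    haveI : Fact p.Prime := ⟨hp⟩
    haveI : IsCyclic P := isCyclic_of_prime_card hP
    letI := IsCyclic.commGroup (α := P)
    intro a b
    exact congrArg Subtype.val (mul_comm a b)
  have hcomm' : ∀ (m : P) (n : Subgroup.zpowers z),
      Commute (P.subtype m) ((Subgroup.zpowers z).subtype n) := by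
    rintro m ⟨n, k, rfl⟩
    exact ((hcomm m m.2).zpow_left k).symm
  let f := MonoidHom.noncommCoprod P.subtype (Subgroup.zpowers z).subtype hcomm'
  have hcZ : Nat.card (Subgroup.zpowers z) = p := by rw [Nat.card_zpowers, hz]
  have hHcomm : ∀ x ∈ f.range, ∀ y ∈ f.range, x * y = y * x := by
    rintro _ ⟨⟨a1, b1⟩, rfl⟩ _ ⟨⟨a2, b2⟩, rfl⟩
    simp only [MonoidHom.noncommCoprod_apply, f]
    have cab1 : Commute (P.subtype a2) ((Subgroup.zpowers z).subtype b1) := hcomm' a2 b1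
    have cab2 : Commute (P.subtype a1) ((Subgroup.zpowers z).subtype b2) := hcomm' a1 b2
    have caa : Commute (P.subtype a1) (P.subtype a2) := hPc a1 a2
    have cbb : Commute ((Subgroup.zpowers z).subtype b1) ((Subgroup.zpowers z).subtype b2) := by
      obtain ⟨_, k1, rfl⟩ := b1; obtain ⟨_, k2, rfl⟩ := b2
      exact (Commute.refl z).zpow_zpow k1 k2
    exact (caa.mul_right cab2).mul_left (cab1.symm.mul_right cbb)
  have hHpow : ∀ x ∈ f.range, x ^ p = 1 := by
    rintro _ ⟨⟨a, b⟩, rfl⟩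
    rw [← map_pow, Prod.pow_def]
    have ha : a ^ p = 1 := by rw [← hP]; exact pow_card_eq_one'
    have hb : b ^ p = 1 := by rw [← hcZ]; exact pow_card_eq_one'
    rw [ha, hb]; exact map_one f
  have hle : P ≤ f.range := by
    intro a ha
    exact ⟨(⟨a, ha⟩, 1), by simp [f]⟩
  have hcard : Nat.card f.range ≤ p := hrank f.range hHcomm hHpow
  have hPeq : P = f.range := Subgroup.eq_of_le_of_card_ge hle (hP ▸ hcard)
  have hzmem : z ∈ P := by
    rw [hPeq]
    exact ⟨(1, ⟨z, Subgroup.mem_zpowers z⟩), by simp [f]⟩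
  have hle2 : Subgroup.zpowers z ≤ P := (Subgroup.zpowers_le).mpr hzmem
  exact (Subgroup.eq_of_le_of_card_ge hle2 (by rw [hcZ, hP])).symm

/-- In a finite group of `p`-rank one (every commutative subgroup of exponent dividing `p`
has order at most `p`), any two subgroups of order `p` are conjugate. -/
theorem subgroups_order_p_conjugate_of_p_rank_one {G : Type*} [Group G] [Finite G]
    {p : ℕ} (hp : p.Prime)
    (hrank : ∀ H : Subgroup G, (∀ x ∈ H, ∀ y ∈ H, x * y = y * x) →
      (∀ x ∈ H, x ^ p = 1) → Nat.card H ≤ p)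
    (P Q : Subgroup G) (hP : Nat.card P = p) (hQ : Nat.card Q = p) :
    ∃ g : G, Subgroup.map (MulAut.conj g).toMonoidHom P = Q := by
  haveI : Fact p.Prime := ⟨hp⟩
  have hPp : IsPGroup p P := IsPGroup.of_card (by rw [hP, pow_one])
  have hQp : IsPGroup p Q := IsPGroup.of_card (by rw [hQ, pow_one])
  obtain ⟨S, hPS⟩ := hPp.exists_le_sylow
  obtain ⟨T, hQT⟩ := hQp.exists_le_sylow
  obtain ⟨g, hg⟩ := MulAction.exists_smul_eq G T S
  -- Q' := conjugate of Q, lives in S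
  set Q' : Subgroup G := Subgroup.map (MulAut.conj g).toMonoidHom Q with hQ'def
  have hQ'S : Q' ≤ S := by
    rw [← hg]
    calc Q' ≤ Subgroup.map (MulAut.conj g).toMonoidHom T := Subgroup.map_mono hQT
      _ = ((g • T : Sylow p G) : Subgroup G) := rfl
  have hQ'card : Nat.card Q' = p := by
    rw [hQ'def, ← hQ]
    exact (Nat.card_congr (Subgroup.equivMapOfInjective Q _
      (MulAut.conj g).injective).toEquiv).symm
  -- find central element of order p in S
  haveI : Nontrivial P := Finite.one_lt_card_iff_nontrivial.mp (hP ▸ hp.one_lt)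
  haveI : Nontrivial S := by
    obtain ⟨x, hx, hx1⟩ := (Subgroup.nontrivial_iff_exists_ne_one P).mp inferInstance
    exact (Subgroup.nontrivial_iff_exists_ne_one (S : Subgroup G)).mpr ⟨x, hPS hx, hx1⟩
  haveI := S.2.center_nontrivial
  have hdvd : p ∣ Nat.card (Subgroup.center S) := by
    obtain ⟨n, hn, hcard⟩ := ((S.2.to_subgroup (Subgroup.center S)).nontrivial_iff_card).mp
      inferInstance
    exact hcard ▸ dvd_pow_self p hn.ne'
  obtain ⟨c, hc⟩ := exists_prime_orderOf_dvd_card' p hdvd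
  set z : G := ((c : S) : G) with hzdef
  have hzord : orderOf z = p := by
    have e : z = (S : Subgroup G).subtype ((Subgroup.center (S : Subgroup G)).subtype c) := rfl
    rw [e, orderOf_injective (S : Subgroup G).subtype (S : Subgroup G).subtype_injective,
      orderOf_injective (Subgroup.center (S : Subgroup G)).subtype
        (Subgroup.center (S : Subgroup G)).subtype_injective, hc]
  have hzcomm : ∀ x ∈ (S : Subgroup G), Commute z x := by
    intro x hx
    have h := (Subgroup.mem_center_iff.mp c.2) ⟨x, hx⟩
    have h2 : x * z = z * x := congrArg Subtype.val h
    exact h2.symm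
  have hPz : P = Subgroup.zpowers z :=
    aux_eq_zpowers hp hrank P hP z hzord (fun x hx => hzcomm x (hPS hx))
  have hQz : Q' = Subgroup.zpowers z :=
    aux_eq_zpowers hp hrank Q' hQ'card z hzord (fun x hx => hzcomm x (hQ'S hx))
  refine ⟨g⁻¹, ?_⟩
  have : Subgroup.map (MulAut.conj g).toMonoidHom Q = P := by rw [hQ'def] at hQz; rw [hPz, hQz]
  calc Subgroup.map (MulAut.conj g⁻¹).toMonoidHom P
      = Subgroup.map (MulAut.conj g⁻¹).toMonoidHom
          (Subgroup.map (MulAut.conj g).toMonoidHom Q) := by rw [this]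
    _ = Q := by
        rw [Subgroup.map_map]
        convert Subgroup.map_id Q
        ext x
        simp [mul_assoc]
end

section
/- Let R be a commutative ring and B a separable commutative R-algebra which is finitely generated and projective as an R-module. Then B is an étale R-algebra, i.e. R → B is flat, of finite presentation, and formally unramified (equivalently, formally étale and of finite presentation). -/
open scoped TensorProduct

universe u

/-!
A finite projective module is finitely presented, and projective modules are flat. Writing
`e = ∑ xᵢ ⊗ yᵢ`, the element `e` is exactly the witness of formal unramifiedness. For formal
smoothness, lift `f : A →ₐ C ⧸ I` with `I ^ 2 = ⊥` to an `R`-linear `g : A → C` by projectivity.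
Its defect `δ (a, b) = g (a * b) - g a * g b` is an `I`-valued Hochschild 2-cocycle, and `e`
contracts it: `δ` is the coboundary of `φ c = ∑ g xᵢ * δ (yᵢ, c)`, so `g + φ` is an algebra lift.
-/

theorem Ideal.mul_eq_zero_of_sq_eq_bot {C : Type*} [CommRing C] {I : Ideal C} (hI : I ^ 2 = ⊥)
    {x y : C} (hx : x ∈ I) (hy : y ∈ I) : x * y = 0 := by
  simpa [hI] using (pow_two I ▸ Ideal.mul_mem_mul hx hy : x * y ∈ I ^ 2)

namespace LinearMap

variable {R A C : Type*} [CommRing R] [Ring A] [Ring C] [Algebra R A] [Algebra R C]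

def mulDefect (g : A →ₗ[R] C) : A →ₗ[R] A →ₗ[R] C :=
  (LinearMap.mul R A).compr₂ g - (LinearMap.mul R C).compl₁₂ g g

@[simp]
theorem mulDefect_apply (g : A →ₗ[R] C) (a b : A) :
    g.mulDefect a b = g (a * b) - g a * g b := rfl

theorem mul_mulDefect (g : A →ₗ[R] C) (y a b : A) :
    g y * g.mulDefect a b =
      g.mulDefect (y * a) b - g.mulDefect y (a * b) + g.mulDefect y a * g b := by
  simp only [mulDefect_apply, mul_assoc, mul_sub, sub_mul]
  abel

end LinearMap

namespace IsSeparabilityIdempotent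

variable {R A : Type*} [CommRing R] [CommRing A] [Algebra R A] {e : A ⊗[R] A}

theorem formallyUnramified [Algebra.EssFiniteType R A] (he : IsSeparabilityIdempotent R A e) :
    Algebra.FormallyUnramified R A :=
  Algebra.FormallyUnramified.iff_exists_tensorProduct.mpr
    ⟨e, fun a => by rw [sub_mul, he.2 a, sub_self], he.1⟩

section

variable (he : IsSeparabilityIdempotent R A e) {S : Finset (A × A)}
  (hS : e = ∑ p ∈ S, p.1 ⊗ₜ[R] p.2)
include he hS

theorem sum_mul_eq_one : ∑ p ∈ S, p.1 * p.2 = 1 := by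
  simpa [hS] using he.1

theorem sum_bilin_mul_left_eq {M : Type*} [AddCommGroup M] [Module R M]
    (β : A →ₗ[R] A →ₗ[R] M) (a : A) :
    ∑ p ∈ S, β (a * p.1) p.2 = ∑ p ∈ S, β p.1 (a * p.2) := by
  simpa [hS, Finset.mul_sum] using congrArg (TensorProduct.lift β) (he.2 a)

end

section

variable {C : Type*} [CommRing C] [Algebra R C]

def correction (g : A →ₗ[R] C) (S : Finset (A × A)) : A →ₗ[R] C :=
  ∑ p ∈ S, LinearMap.mulLeft R (g p.1) ∘ₗ g.mulDefect p.2

theorem correction_apply (g : A →ₗ[R] C) (S : Finset (A × A)) (c : A) :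
    correction g S c = ∑ p ∈ S, g p.1 * g.mulDefect p.2 c := by
  simp [correction]

section

variable {I : Ideal C} {f : A →ₐ[R] C ⧸ I} {g : A →ₗ[R] C}
  (hg : ∀ a, Ideal.Quotient.mk I (g a) = f a)
include hg

theorem mulDefect_mem (a b : A) : g.mulDefect a b ∈ I := by
  rw [← Ideal.Quotient.eq_zero_iff_mem, LinearMap.mulDefect_apply, map_sub,
    map_mul (Ideal.Quotient.mk I), hg, hg, hg, map_mul, sub_self]

theorem correction_mem (S : Finset (A × A)) (c : A) : correction g S c ∈ I := by
  rw [correction_apply]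
  exact I.sum_mem fun p _ => I.mul_mem_left _ (mulDefect_mem hg p.2 c)

variable (he : IsSeparabilityIdempotent R A e) {S : Finset (A × A)}
  (hS : e = ∑ p ∈ S, p.1 ⊗ₜ[R] p.2) (hI : I ^ 2 = ⊥)
include he hS hI

theorem mulDefect_eq_coboundary (a b : A) :
    g.mulDefect a b =
      g a * correction g S b - correction g S (a * b) + correction g S a * g b := by
  have hm : ∑ p ∈ S, g p.1 * g p.2 - 1 ∈ I := by
    rw [← Ideal.Quotient.eq_zero_iff_mem, map_sub, map_one, map_sum, sub_eq_zero]
    simp_rw [map_mul, hg, ← map_mul, ← map_sum, sum_mul_eq_one he hS, map_one]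
  have hbalance : ∑ p ∈ S, g p.1 * g.mulDefect (p.2 * a) b = g a * correction g S b := by
    have := sum_bilin_mul_left_eq he hS ((LinearMap.mul R C).compl₁₂ g (g.mulDefect.flip b)) a
    simp only [LinearMap.compl₁₂_apply, LinearMap.mul_apply', LinearMap.flip_apply] at this
    simp_rw [mul_comm _ a, ← this, correction_apply, Finset.mul_sum]
    refine Finset.sum_congr rfl fun p _ => ?_
    have hga : g (a * p.1) = g a * g p.1 + g.mulDefect a p.1 := by
      rw [LinearMap.mulDefect_apply]; ring
    rw [hga, add_mul, mul_assoc, add_eq_left,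
      Ideal.mul_eq_zero_of_sq_eq_bot hI (mulDefect_mem hg a p.1) (mulDefect_mem hg p.2 b)]
  calc g.mulDefect a b = (∑ p ∈ S, g p.1 * g p.2) * g.mulDefect a b := by
        rw [← sub_eq_zero, ← one_sub_mul, ← neg_sub, neg_mul,
          Ideal.mul_eq_zero_of_sq_eq_bot hI hm (mulDefect_mem hg a b), neg_zero]
    _ = ∑ p ∈ S, g p.1 * (g p.2 * g.mulDefect a b) := by
        simp_rw [Finset.sum_mul, mul_assoc]
    _ = _ := by
        simp_rw [LinearMap.mul_mulDefect, mul_add, mul_sub, Finset.sum_add_distrib,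
          Finset.sum_sub_distrib, hbalance, correction_apply, Finset.sum_mul, mul_assoc]

theorem add_correction_map_mul (a b : A) :
    (g + correction g S) (a * b) = (g + correction g S) a * (g + correction g S) b := by
  have hδ := mulDefect_eq_coboundary hg he hS hI a b
  have hφφ := Ideal.mul_eq_zero_of_sq_eq_bot hI (correction_mem hg S a) (correction_mem hg S b)
  rw [LinearMap.mulDefect_apply] at hδ
  simp only [LinearMap.add_apply]
  linear_combination hδ - hφφ

end

theorem exists_algHom_lift {I : Ideal C} (he : IsSeparabilityIdempotent R A e) (hI : I ^ 2 = ⊥)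
    (f : A →ₐ[R] C ⧸ I) (g : A →ₗ[R] C) (hg : ∀ a, Ideal.Quotient.mk I (g a) = f a) :
    ∃ h : A →ₐ[R] C, (Ideal.Quotient.mkₐ R I).comp h = f := by
  obtain ⟨S, hS⟩ := TensorProduct.exists_finset e
  set h := g + correction g S
  have hlift : ∀ a, Ideal.Quotient.mk I (h a) = f a := fun a => by
    rw [LinearMap.add_apply, map_add, hg,
      Ideal.Quotient.eq_zero_iff_mem.mpr (correction_mem hg S a), add_zero]
  have hmul : ∀ a b, h (a * b) = h a * h b := add_correction_map_mul hg he hS hI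
  -- `h 1` is an idempotent congruent to `1` modulo the square-zero ideal `I`.
  have hone : h 1 = 1 := by
    have hidem := hmul 1 1
    have hmem : h 1 - 1 ∈ I := by
      rw [← Ideal.Quotient.eq_zero_iff_mem, map_sub, hlift, map_one, map_one, sub_self]
    have hsq := Ideal.mul_eq_zero_of_sq_eq_bot hI hmem hmem
    rw [mul_one] at hidem
    linear_combination -hsq - hidem
  exact ⟨AlgHom.ofLinearMap h hone hmul, AlgHom.ext hlift⟩

end

theorem formallySmooth [Module.Projective R A] (he : IsSeparabilityIdempotent R A e) :
    Algebra.FormallySmooth R A := by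
  refine .of_comp_surjective fun C _ _ I hI f => ?_
  obtain ⟨g, hg⟩ := Module.projective_lifting_property (Ideal.Quotient.mkₐ R I).toLinearMap
    f.toLinearMap Ideal.Quotient.mk_surjective
  exact exists_algHom_lift he hI f g (LinearMap.congr_fun hg)

end IsSeparabilityIdempotent

/-- A separable commutative `R`-algebra `B` which is finitely generated projective as an
`R`-module is étale: `R → B` is flat, of finite presentation, and formally unramified
(equivalently, formally étale and of finite presentation). -/
theorem separable_finite_projective_etale {R B : Type u} [CommRing R] [CommRing B]
    [Algebra R B] (hsep : ∃ e : B ⊗[R] B, IsSeparabilityIdempotent R B e)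
    [Module.Finite R B] [Module.Projective R B] :
    Module.Flat R B ∧ Algebra.FinitePresentation R B ∧
      Algebra.FormallyUnramified R B ∧ Algebra.FormallyEtale R B := by
  obtain ⟨e, he⟩ := hsep
  have : Module.FinitePresentation R B := Module.finitePresentation_of_projective R B
  have := he.formallyUnramified
  have := he.formallySmooth
  exact ⟨inferInstance, inferInstance, inferInstance,
    .of_formallyUnramified_and_formallySmooth⟩
end
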